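/- arXiv:2306.00493 — 2 statements merged into one kernel-verified Lean document; each statement's English description precedes it below -/
import Mathlib

section
/- Let S be a finite monoid and A a finite set. For every set F ⊆ SOp(A) of S-operations on A, the set SInv F of all invariant S-relations of F is an S-relational clone. -/
namespace SPreclone

/-- An `S`-operation on `A`: an `(n+1)`-ary operation together with a signum
assigning an element of `S` to each argument. -/
structure SOp (S A : Type*) where
  n : ℕ
  fn : (Fin (n + 1) → A) → A
  sgn : Fin (n + 1) → S

/-- An `S`-relation on `A`: a family of `(m+1)`-ary relations indexed by `S`. -/
structure SRel (S A : Type*) where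
  m : ℕ
  rel : S → Set (Fin (m + 1) → A)

section

variable {S A : Type*} [Monoid S]

/-- `f` S-preserves `ρ`. -/
def SPreserves (f : SOp S A) (ρ : SRel S A) : Prop :=
  ∀ s : S, ∀ r : Fin (f.n + 1) → (Fin (ρ.m + 1) → A),
    (∀ i, r i ∈ ρ.rel (f.sgn i * s)) →
    (fun j => f.fn fun i => r i j) ∈ ρ.rel s

/-- `S`-polymorphisms of a set of `S`-relations. -/
def SPol (Q : Set (SRel S A)) : Set (SOp S A) := { f | ∀ ρ ∈ Q, SPreserves f ρ }

/-- Invariant `S`-relations of a set of `S`-operations. -/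
def SInv (F : Set (SOp S A)) : Set (SRel S A) := { ρ | ∀ f ∈ F, SPreserves f ρ }

/-- The identity operation, with signum `(e)`. -/
def idOp (S A : Type*) [Monoid S] : SOp S A := ⟨0, fun x => x 0, fun _ => 1⟩

/-- Cyclic shift `ζ` of the arguments (and the signa). -/
def cycOp (f : SOp S A) : SOp S A :=
  ⟨f.n, fun x => f.fn fun j => x (j + 1), fun i => f.sgn (i - 1)⟩

/-- Transposition `τ` of the first two arguments (and their signa). -/
def swapOp (f : SOp S A) : SOp S A :=
  ⟨f.n, fun x => f.fn fun j => x (Equiv.swap 0 1 j), fun i => f.sgn (Equiv.swap 0 1 i)⟩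

/-- `∇^s`: adding a fictitious first argument with signum `s`. -/
def nablaOp (s : S) (f : SOp S A) : SOp S A :=
  ⟨f.n + 1, fun x => f.fn fun j => x j.succ, Fin.cases (motive := fun _ => S) s f.sgn⟩

open Classical in
/-- `Δ`: identification of the first two arguments when they have the same signum
(otherwise, and for unary operations, `Δ f := f`). -/
noncomputable def deltaOp (f : SOp S A) : SOp S A :=
  match f with
  | ⟨0, fn, sgn⟩ => ⟨0, fn, sgn⟩
  | ⟨m + 1, fn, sgn⟩ =>
    if sgn 0 = sgn 1 then
      ⟨m, fun x => fn fun j => x ⟨j.val - 1, by have := j.isLt; omega⟩,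
        fun i => sgn i.succ⟩
    else ⟨m + 1, fn, sgn⟩

/-- Composition `(f ∘ g)(x₁,…,x_m,x_{m+1},…,x_{m+n-1}) = f(g(x₁,…,x_m),x_{m+1},…,x_{m+n-1})`,
with signum `(s'₁s₁, …, s'_m s₁, s₂, …, s_n)`. -/
def compOp (f g : SOp S A) : SOp S A :=
  ⟨g.n + f.n,
   fun x => f.fn fun k => Fin.cases (motive := fun _ => A)
     (g.fn fun i => x ⟨i.val, by have := i.isLt; omega⟩)
     (fun j => x ⟨g.n + 1 + j.val, by have := j.isLt; omega⟩) k,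
   fun i =>
     if h : i.val < g.n + 1 then g.sgn ⟨i.val, h⟩ * f.sgn 0
     else f.sgn ⟨i.val - g.n, by have := i.isLt; omega⟩⟩

/-- A set of `S`-operations is an `S`-preclone if it contains the identity and is closed
under `ζ`, `τ`, `∇^s`, `Δ` and composition. -/
def IsSPreclone (F : Set (SOp S A)) : Prop :=
  idOp S A ∈ F ∧
  (∀ f ∈ F, cycOp f ∈ F) ∧
  (∀ f ∈ F, swapOp f ∈ F) ∧
  (∀ (s : S), ∀ f ∈ F, nablaOp s f ∈ F) ∧
  (∀ f ∈ F, deltaOp f ∈ F) ∧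
  (∀ f ∈ F, ∀ g ∈ F, compOp f g ∈ F)

/-- The `S`-preclone generated by `F` (the least `S`-preclone containing `F`). -/
def SSg (F : Set (SOp S A)) : Set (SOp S A) := ⋂₀ { G | IsSPreclone G ∧ F ⊆ G }

/-- `δ^S := (Δ_A)_{s ∈ S}`. -/
def deltaS (S A : Type*) : SRel S A := ⟨1, fun _ => { a | a 0 = a 1 }⟩

/-- Componentwise cyclic shift of coordinates. -/
def cycRel (ρ : SRel S A) : SRel S A :=
  ⟨ρ.m, fun s => { b | (fun i => b (i - 1)) ∈ ρ.rel s }⟩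

/-- Componentwise transposition of the first two coordinates. -/
def swapRel (ρ : SRel S A) : SRel S A :=
  ⟨ρ.m, fun s => { b | (fun i => b (Equiv.swap 0 1 i)) ∈ ρ.rel s }⟩

/-- Componentwise deletion of the first coordinate (identity on unary relations). -/
def prRel (ρ : SRel S A) : SRel S A :=
  match ρ with
  | ⟨0, r⟩ => ⟨0, r⟩
  | ⟨m + 1, r⟩ => ⟨m, fun s => { b | ∃ a ∈ r s, b = fun j => a j.succ }⟩

/-- Componentwise Cartesian product. -/
def prodRel (ρ ρ' : SRel S A) : SRel S A :=
  ⟨ρ.m + ρ'.m + 1, fun s =>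
    { c | (fun i : Fin (ρ.m + 1) => c ⟨i.val, by have := i.isLt; omega⟩) ∈ ρ.rel s ∧
          (fun i : Fin (ρ'.m + 1) => c ⟨ρ.m + 1 + i.val, by have := i.isLt; omega⟩) ∈ ρ'.rel s }⟩

/-- Componentwise intersection; empty if the arities differ. -/
def interRel (ρ ρ' : SRel S A) : SRel S A :=
  if h : ρ.m = ρ'.m then
    ⟨ρ.m, fun s => { a | a ∈ ρ.rel s ∧
        (fun i : Fin (ρ'.m + 1) => a (Fin.cast (by omega) i)) ∈ ρ'.rel s }⟩
  else ⟨ρ.m, fun _ => ∅⟩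

/-- Index translation `μ_v(ρ) := (ρ_{sv})_{s ∈ S}`. -/
def muRel (v : S) (ρ : SRel S A) : SRel S A := ⟨ρ.m, fun s => ρ.rel (s * v)⟩

/-- `v`-self-intersection `(⊓^v ρ)_s := ⋂ { ρ_{s'} ∣ s'v = s }`
(an empty intersection being the full relation). -/
def selfInterRel (v : S) (ρ : SRel S A) : SRel S A :=
  ⟨ρ.m, fun s => { a | ∀ s' : S, s' * v = s → a ∈ ρ.rel s' }⟩

/-- A set of `S`-relations is an `S`-relational clone if it contains `δ^S` and is
closed under `ζ`, `τ`, `pr`, `×`, `∧`, `μ_v` and `⊓^v`. -/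
def IsSRelClone (Q : Set (SRel S A)) : Prop :=
  deltaS S A ∈ Q ∧
  (∀ ρ ∈ Q, cycRel ρ ∈ Q) ∧
  (∀ ρ ∈ Q, swapRel ρ ∈ Q) ∧
  (∀ ρ ∈ Q, prRel ρ ∈ Q) ∧
  (∀ ρ ∈ Q, ∀ ρ' ∈ Q, prodRel ρ ρ' ∈ Q) ∧
  (∀ ρ ∈ Q, ∀ ρ' ∈ Q, interRel ρ ρ' ∈ Q) ∧
  (∀ (v : S), ∀ ρ ∈ Q, muRel v ρ ∈ Q) ∧
  (∀ (v : S), ∀ ρ ∈ Q, selfInterRel v ρ ∈ Q)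

/-- The `S`-relational clone generated by `Q`. -/
def SRg (Q : Set (SRel S A)) : Set (SRel S A) := ⋂₀ { R | IsSRelClone R ∧ Q ⊆ R }

/-- `Γ_F(ρ)`: the least `S`-relation of the same arity containing `ρ` and invariant
for `F` (defined as the intersection of all such). -/
def Gamma (F : Set (SOp S A)) (ρ : SRel S A) : SRel S A :=
  ⟨ρ.m, fun s => ⋂ g ∈ { g : S → Set (Fin (ρ.m + 1) → A) |
      (⟨ρ.m, g⟩ : SRel S A) ∈ SInv F ∧ ∀ t, ρ.rel t ⊆ g t }, g s⟩

/-- Trivial `S`-operations (trivial projections): projections whose essential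
argument has signum `e`. -/
def SJ (S A : Type*) [Monoid S] : Set (SOp S A) :=
  { f | ∃ i : Fin (f.n + 1), f.sgn i = 1 ∧ ∀ x, f.fn x = x i }

/-- A diagonal relation: empty, or defined by an equivalence relation on the coordinates. -/
def IsDiagonal {A : Type*} {m : ℕ} (σ : Set (Fin m → A)) : Prop :=
  σ = ∅ ∨ ∃ ε : Fin m → Fin m → Prop, Equivalence ε ∧ σ = { a | ∀ i j, ε i j → a i = a j }

/-- `S`-diagonal `S`-relations. -/
def SD (S A : Type*) [Monoid S] : Set (SRel S A) :=
  { ρ | (∀ s, IsDiagonal (ρ.rel s)) ∧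
      ∀ s t : S, ({ x | ∃ u, x = u * s } : Set S) ⊆ { x | ∃ u, x = u * t } →
        ρ.rel s ⊆ ρ.rel t }

/-- Projection of an `S`-relation to the rows `z 0, …, z t` (componentwise). -/
def prMulti {t : ℕ} (ρ : SRel S A) (z : Fin (t + 1) → Fin (ρ.m + 1)) : SRel S A :=
  ⟨t, fun s => { b | ∃ a ∈ ρ.rel s, b = fun j => a (z j) }⟩

/-- One step of the inductive construction of `Γ_F(ρ)`:
`R s ∪ { f(r₁,…,r_n) ∣ f ∈ F, r_j ∈ R (sgn(f)_j * s) }`. -/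
def gammaStep (F : Set (SOp S A)) {m : ℕ}
    (R : S → Set (Fin (m + 1) → A)) : S → Set (Fin (m + 1) → A) :=
  fun s => R s ∪ { b | ∃ f ∈ F, ∃ r : Fin (f.n + 1) → (Fin (m + 1) → A),
    (∀ j, r j ∈ R (f.sgn j * s)) ∧ b = fun z => f.fn fun j => r j z }

/-- `χ` is (a presentation of) the `S`-relation `χ^λ`: its rows are enumerated by
*all* tuples of `A^n` via `e`, and its `s`-component consists exactly of the columns
`κ_i` with `λ i = s`. -/
def IsChi {n : ℕ} (lam : Fin n → S) (χ : SRel S A) : Prop :=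
  ∃ e : Fin (χ.m + 1) ≃ (Fin n → A),
    ∀ s, χ.rel s = { c | ∃ i, lam i = s ∧ c = fun z => e z i }

/-- `γ_Q(ρ)`: the least `S`-relation of the same arity containing `ρ` and belonging
to the `S`-relational clone generated by `Q` (defined as the intersection of all such). -/
def gammaQ (Q : Set (SRel S A)) (ρ : SRel S A) : SRel S A :=
  ⟨ρ.m, fun s => ⋂ g ∈ { g : S → Set (Fin (ρ.m + 1) → A) |
      (⟨ρ.m, g⟩ : SRel S A) ∈ SRg Q ∧ ∀ t, ρ.rel t ⊆ g t }, g s⟩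

/-- `π`-dual of an `S`-operation. -/
def opPi (π : Equiv.Perm A) (f : SOp S A) : SOp S A :=
  ⟨f.n, fun x => π (f.fn fun i => π.symm (x i)), f.sgn⟩

/-- `π`-dual of an `S`-relation. -/
def relPi (π : Equiv.Perm A) (ρ : SRel S A) : SRel S A :=
  ⟨ρ.m, fun s => { b | ∃ a ∈ ρ.rel s, b = fun i => π (a i) }⟩

/-- `h`-dual of an `S`-operation (only the signum changes). -/
def opH (h : S ≃* S) (f : SOp S A) : SOp S A :=
  ⟨f.n, f.fn, fun i => h (f.sgn i)⟩

/-- `h`-dual of an `S`-relation: `ρ^h := (ρ_{h⁻¹(s)})_{s ∈ S}`. -/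
def relH (h : S ≃* S) (ρ : SRel S A) : SRel S A :=
  ⟨ρ.m, fun s => ρ.rel (h.symm s)⟩

end

/-- An ordinary (unsigned) operation on `A`. -/
structure UOp (A : Type*) where
  n : ℕ
  fn : (Fin (n + 1) → A) → A

/-- An ordinary (unsigned) relation on `A`. -/
structure URel (A : Type*) where
  m : ℕ
  rel : Set (Fin (m + 1) → A)

/-- Ordinary preservation of a relation by an operation. -/
def UPreserves {A : Type*} (f : UOp A) (σ : URel A) : Prop :=
  ∀ r : Fin (f.n + 1) → (Fin (σ.m + 1) → A),
    (∀ i, r i ∈ σ.rel) → (fun j => f.fn fun i => r i j) ∈ σ.rel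

/-- Polymorphisms of a set of ordinary relations. -/
def UPol {A : Type*} (R : Set (URel A)) : Set (UOp A) := { f | ∀ σ ∈ R, UPreserves f σ }

/-- A clone: contains all projections and is closed under composition. -/
def IsClone {A : Type*} (C : Set (UOp A)) : Prop :=
  (∀ (n : ℕ) (i : Fin (n + 1)), (⟨n, fun x => x i⟩ : UOp A) ∈ C) ∧
  (∀ f ∈ C, ∀ (m : ℕ) (g : Fin (f.n + 1) → ((Fin (m + 1) → A) → A)),
    (∀ i, (⟨m, g i⟩ : UOp A) ∈ C) → (⟨m, fun x => f.fn fun i => g i x⟩ : UOp A) ∈ C)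

/-- The clone generated by a set of operations. -/
def CloneGen {A : Type*} (G : Set (UOp A)) : Set (UOp A) := ⋂₀ { C | IsClone C ∧ G ⊆ C }

/-- For every set `F` of `S`-operations, `SInv F` is an `S`-relational clone. -/
theorem isSRelClone_SInv {S A : Type*} [Monoid S] [Fintype S] [Fintype A]
    (F : Set (SOp S A)) :
    IsSRelClone (SInv F) := by
  refine ⟨?_, ?_, ?_, ?_, ?_, ?_, ?_, ?_⟩
  · -- deltaS
    intro f _ s r hr
    simp only [deltaS, Set.mem_setOf_eq] at *
    exact congrArg f.fn (funext fun i => hr i)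
  · -- cycRel
    intro ρ hρ f hf s r hr
    simp only [cycRel, Set.mem_setOf_eq] at hr ⊢
    exact hρ f hf s (fun i (z : Fin (ρ.m + 1)) => (show Fin (ρ.m + 1) → A from r i) (z - 1)) hr
  · -- swapRel
    intro ρ hρ f hf s r hr
    simp only [swapRel, Set.mem_setOf_eq] at hr ⊢
    exact hρ f hf s (fun i z => r i (Equiv.swap 0 1 z)) hr
  · -- prRel
    intro ρ hρ f hf
    obtain ⟨m, rel⟩ := ρ
    cases m with
    | zero => exact hρ f hf
    | succ m =>
      intro s r hr
      simp only [prRel, Set.mem_setOf_eq] at hr ⊢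
      choose a ha hra using hr
      refine ⟨fun j => f.fn fun i => a i j, hρ f hf s a ha, ?_⟩
      funext j
      congr 1
      funext i
      rw [hra i]
  · -- prodRel
    intro ρ hρ ρ' hρ' f hf s r hr
    simp only [prodRel, Set.mem_setOf_eq] at hr ⊢
    exact ⟨hρ f hf s _ fun i => (hr i).1, hρ' f hf s _ fun i => (hr i).2⟩
  · -- interRel
    intro ρ hρ ρ' hρ' f hf
    unfold interRel
    by_cases h : ρ.m = ρ'.m
    · rw [dif_pos h]
      intro s r hr
      exact ⟨hρ f hf s _ fun i => (hr i).1, hρ' f hf s _ fun i => (hr i).2⟩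
    · rw [dif_neg h]
      intro s r hr
      exact absurd (hr 0) (Set.notMem_empty _)
  · -- muRel
    intro v ρ hρ f hf s r hr
    simp only [muRel] at hr ⊢
    have := hρ f hf (s * v) r (fun i => by rw [← mul_assoc]; exact hr i)
    exact this
  · -- selfInterRel
    intro v ρ hρ f hf s r hr
    simp only [selfInterRel, Set.mem_setOf_eq] at hr ⊢
    intro s' hs'
    exact hρ f hf s' r fun i => hr i (f.sgn i * s') (by rw [mul_assoc, hs'])

end SPreclone
end

section
/- Let S be a finite monoid and A a finite set. The set SD_A of all S-diagonals satisfies SD_A = [∅]_S = [{δ^S}]_S; in particular, SD_A is itself an S-relational clone, it is contained in every S-relational clone, and it is the least S-relational clone on A. -/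
namespace SPreclone

section AuxDiag

variable {A : Type*}

/-- The canonical equivalence-kernel of a set of tuples. -/
def kap {N : ℕ} (σ : Set (Fin N → A)) (i j : Fin N) : Prop := ∀ b ∈ σ, b i = b j

/-- The diagonal closure of a set of tuples. -/
def dOf {N : ℕ} (σ : Set (Fin N → A)) : Set (Fin N → A) :=
  {a | ∀ i j, kap σ i j → a i = a j}

lemma subset_dOf {N : ℕ} (σ : Set (Fin N → A)) : σ ⊆ dOf σ :=
  fun a ha _i _j h => h a ha

lemma isDiagonal_iff {N : ℕ} {σ : Set (Fin N → A)} :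
    IsDiagonal σ ↔ σ = ∅ ∨ σ = dOf σ := by
  constructor
  · rintro (rfl | ⟨ε, hε, rfl⟩)
    · exact Or.inl rfl
    · refine Or.inr (Set.Subset.antisymm (subset_dOf _) ?_)
      intro a ha i j hij
      exact ha i j (fun b hb => hb i j hij)
  · rintro (rfl | h)
    · exact Or.inl rfl
    · exact Or.inr ⟨kap σ, ⟨fun i b _ => rfl, fun h b hb => (h b hb).symm,
        fun h h' b hb => (h b hb).trans (h' b hb)⟩, h⟩

lemma isDiagonal_forall {N : ℕ} {ι : Sort*} {f : ι → Set (Fin N → A)}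
    (h : ∀ i, IsDiagonal (f i)) : IsDiagonal {a : Fin N → A | ∀ i, a ∈ f i} := by
  by_cases he : ∃ i, f i = ∅
  · obtain ⟨i, hi⟩ := he
    rw [isDiagonal_iff]; left
    rw [Set.eq_empty_iff_forall_notMem]
    intro a ha
    have := ha i; rw [hi] at this; exact this
  · have hd : ∀ i, f i = dOf (f i) := fun i =>
      ((isDiagonal_iff).1 (h i)).resolve_left (fun hc => he ⟨i, hc⟩)
    rw [isDiagonal_iff]; right
    refine Set.Subset.antisymm (subset_dOf _) ?_
    intro a ha i
    rw [hd i]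
    intro u v huv
    exact ha u v (fun c hc => huv c (hc i))

lemma isDiagonal_precomp {N k : ℕ} (f : Fin k → Fin N) {σ : Set (Fin k → A)}
    (h : IsDiagonal σ) : IsDiagonal {b : Fin N → A | (fun i => b (f i)) ∈ σ} := by
  rw [isDiagonal_iff] at h ⊢
  rcases h with h | h
  · left; ext b; simp [h]
  · right
    refine Set.Subset.antisymm (subset_dOf _) ?_
    intro a ha
    show (fun i => a (f i)) ∈ σ
    rw [h]
    intro u v huv
    exact ha (f u) (f v) (fun c hc => huv _ hc)

lemma isDiagonal_inter {N : ℕ} {σ σ' : Set (Fin N → A)} (h : IsDiagonal σ)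
    (h' : IsDiagonal σ') : IsDiagonal (σ ∩ σ') := by
  rw [isDiagonal_iff] at h h' ⊢
  rcases h with h | h
  · left; rw [h]; exact Set.empty_inter _
  · rcases h' with h' | h'
    · left; rw [h']; exact Set.inter_empty _
    · right
      refine Set.Subset.antisymm (subset_dOf _) ?_
      intro a ha
      constructor
      · rw [h]; intro u v huv
        exact ha u v (fun c hc => huv c hc.1)
      · rw [h']; intro u v huv
        exact ha u v (fun c hc => huv c hc.2)

lemma isDiagonal_imageSucc {m : ℕ} {σ : Set (Fin (m + 2) → A)} (h : IsDiagonal σ) :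
    IsDiagonal {b : Fin (m + 1) → A | ∃ a ∈ σ, b = fun j => a j.succ} := by
  classical
  rcases isEmpty_or_nonempty A with hA | hA
  · rw [isDiagonal_iff]; left
    rw [Set.eq_empty_iff_forall_notMem]
    rintro b ⟨a, _, _⟩
    exact (hA.false (a 0)).elim
  · rw [isDiagonal_iff] at h ⊢
    rcases h with h | h
    · left; ext b; simp [h]
    · right
      have hss : dOf σ ⊆ σ := le_of_eq h.symm
      refine Set.Subset.antisymm (subset_dOf _) ?_
      intro b hb
      have key : ∀ a0 : A,
          (∀ k : Fin (m + 1), kap σ 0 k.succ → a0 = b k) →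
          (∃ a ∈ σ, b = fun j => a j.succ) := by
        intro a0 ha0
        refine ⟨Fin.cons a0 b, hss ?_, ?_⟩
        · show ∀ u v, kap σ u v → Fin.cons (α := fun _ => A) a0 b u = Fin.cons (α := fun _ => A) a0 b v
          refine Fin.cases (motive := fun u => ∀ v, kap σ u v →
            Fin.cons (α := fun _ => A) a0 b u = Fin.cons (α := fun _ => A) a0 b v) ?_ ?_
          · refine Fin.cases (motive := fun v => kap σ 0 v →
              Fin.cons (α := fun _ => A) a0 b 0 = Fin.cons (α := fun _ => A) a0 b v) ?_ ?_
            · intro _; rfl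
            · intro k hk
              simp only [Fin.cons_zero, Fin.cons_succ]
              exact ha0 k hk
          · intro k
            refine Fin.cases (motive := fun v => kap σ k.succ v →
              Fin.cons (α := fun _ => A) a0 b k.succ = Fin.cons (α := fun _ => A) a0 b v) ?_ ?_
            · intro hk
              simp only [Fin.cons_zero, Fin.cons_succ]
              exact (ha0 k (fun bσ hbσ => (hk bσ hbσ).symm)).symm
            · intro l hkl
              simp only [Fin.cons_succ]
              refine hb k l (fun c hc => ?_)
              obtain ⟨a', ha', rfl⟩ := hc
              exact hkl a' ha'
        · funext j
          simp only [Fin.cons_succ]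
      by_cases h0 : ∃ k : Fin (m + 1), kap σ 0 k.succ
      · refine key (b h0.choose) (fun k hk => ?_)
        refine hb h0.choose k (fun c hc => ?_)
        obtain ⟨a', ha', rfl⟩ := hc
        exact (h0.choose_spec a' ha').symm.trans (hk a' ha')
      · exact key (Classical.arbitrary A) (fun k hk => absurd ⟨k, hk⟩ h0)

end AuxDiag
section AuxClone

variable {S A : Type*} [Monoid S] {R : Set (SRel S A)}

lemma srel_mk_eq {m : ℕ} {r r' : S → Set (Fin (m + 1) → A)} (h : ∀ s, r s = r' s) :
    (⟨m, r⟩ : SRel S A) = ⟨m, r'⟩ := by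
  have : r = r' := funext h
  rw [this]

lemma fin_cast_self {n : ℕ} (p : n = n) (i : Fin n) : Fin.cast p i = i := Fin.ext rfl

lemma srel_cast_eq {m m' : ℕ} (h : m = m') (r : S → Set (Fin (m + 1) → A))
    (r' : S → Set (Fin (m' + 1) → A)) (p : m + 1 = m' + 1)
    (hr : ∀ s (a : Fin (m' + 1) → A),
      a ∈ r' s ↔ (fun i : Fin (m + 1) => a (Fin.cast p i)) ∈ r s) :
    (⟨m, r⟩ : SRel S A) = ⟨m', r'⟩ := by
  subst h
  refine srel_mk_eq fun s => ?_
  ext a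
  rw [hr s a]
  have : (fun i : Fin (m + 1) => a (Fin.cast p i)) = a :=
    funext fun i => congrArg a (fin_cast_self p i)
  rw [this]

lemma full_unary_mem (hR : IsSRelClone R) :
    (⟨0, fun _ => (Set.univ : Set (Fin 1 → A))⟩ : SRel S A) ∈ R := by
  have h1 := hR.2.2.2.1 (deltaS S A) hR.1
  have he : prRel (deltaS S A) =
      (⟨0, fun _ => (Set.univ : Set (Fin 1 → A))⟩ : SRel S A) := by
    refine srel_mk_eq fun s => ?_
    ext b
    simp only [Set.mem_setOf_eq, Set.mem_univ, iff_true]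
    refine ⟨fun _ => b 0, rfl, funext fun j => congrArg b (Fin.eq_zero j)⟩
  rwa [he] at h1

lemma full_mem (hR : IsSRelClone R) (m : ℕ) :
    (⟨m, fun _ => (Set.univ : Set (Fin (m + 1) → A))⟩ : SRel S A) ∈ R := by
  induction m with
  | zero => exact full_unary_mem hR
  | succ m ih =>
    have h1 := hR.2.2.2.2.1 _ (full_unary_mem hR) _ ih
    have he : prodRel (⟨0, fun _ => (Set.univ : Set (Fin 1 → A))⟩ : SRel S A)
        (⟨m, fun _ => (Set.univ : Set (Fin (m + 1) → A))⟩ : SRel S A) =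
        (⟨m + 1, fun _ => (Set.univ : Set (Fin (m + 2) → A))⟩ : SRel S A) := by
      refine srel_cast_eq (by show 0 + m + 1 = m + 1; omega) _ _ (by show 0 + m + 1 + 1 = m + 1 + 1; omega) fun s a => ?_
      simp [prodRel]
    rwa [he] at h1

lemma empty_mem (hR : IsSRelClone R) (m : ℕ) :
    (⟨m, fun _ => (∅ : Set (Fin (m + 1) → A))⟩ : SRel S A) ∈ R := by
  have h1 := hR.2.2.2.2.2.1 _ (full_mem hR m) _ (full_mem hR (m + 1))
  have he : interRel (⟨m, fun _ => (Set.univ : Set (Fin (m + 1) → A))⟩ : SRel S A)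
      (⟨m + 1, fun _ => (Set.univ : Set (Fin (m + 2) → A))⟩ : SRel S A) =
      (⟨m, fun _ => (∅ : Set (Fin (m + 1) → A))⟩ : SRel S A) := by
    rw [interRel]
    simp only []
    rw [dif_neg (by omega : ¬ m = m + 1)]
  rwa [he] at h1

lemma inter_mem (hR : IsSRelClone R) {m : ℕ} {g g' : S → Set (Fin (m + 1) → A)}
    (hg : (⟨m, g⟩ : SRel S A) ∈ R) (hg' : (⟨m, g'⟩ : SRel S A) ∈ R) :
    (⟨m, fun s => g s ∩ g' s⟩ : SRel S A) ∈ R := by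
  have h1 := hR.2.2.2.2.2.1 _ hg _ hg'
  have he : interRel (⟨m, g⟩ : SRel S A) (⟨m, g'⟩ : SRel S A) =
      (⟨m, fun s => g s ∩ g' s⟩ : SRel S A) := by
    rw [interRel]
    simp only []
    rw [dif_pos trivial]
    refine srel_mk_eq fun s => ?_
    ext a
    simp only [Set.mem_setOf_eq, Set.mem_inter_iff]
    have : (fun i : Fin (m + 1) => a (Fin.cast (by omega) i)) = a :=
      funext fun i => congrArg a (fin_cast_self _ i)
    rw [this]
  rwa [he] at h1

lemma foldr_inter_mem (hR : IsSRelClone R) {m : ℕ}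
    (L : List (S → Set (Fin (m + 1) → A)))
    (hL : ∀ g ∈ L, (⟨m, g⟩ : SRel S A) ∈ R) :
    (⟨m, fun s => L.foldr (fun g t => g s ∩ t) Set.univ⟩ : SRel S A) ∈ R := by
  induction L with
  | nil => exact full_mem hR m
  | cons g L ih =>
    exact inter_mem hR (hL g (by simp)) (ih (fun g' hg' => hL g' (by simp [hg'])))

lemma mem_foldr_inter {m : ℕ} {F : Type*} (L : List (F → Set (Fin (m + 1) → A))) (s : F)
    (a : Fin (m + 1) → A) :
    a ∈ L.foldr (fun g t => g s ∩ t) Set.univ ↔ ∀ g ∈ L, a ∈ g s := by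
  induction L with
  | nil => simp
  | cons g L ih => simp [ih]

end AuxClone
section AuxPerm

variable {S A : Type*} [Monoid S] {R : Set (SRel S A)}

lemma perm_mem (hR : IsSRelClone R) {m : ℕ} (π : Equiv.Perm (Fin (m + 1)))
    {g : S → Set (Fin (m + 1) → A)} (hg : (⟨m, g⟩ : SRel S A) ∈ R) :
    (⟨m, fun s => {b | (fun i => b (π i)) ∈ g s}⟩ : SRel S A) ∈ R := by
  set P : Equiv.Perm (Fin (m + 1)) → Prop := fun π =>
    ∀ g : S → Set (Fin (m + 1) → A), (⟨m, g⟩ : SRel S A) ∈ R →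
      (⟨m, fun s => {b | (fun i => b (π i)) ∈ g s}⟩ : SRel S A) ∈ R with hP
  suffices h : P π by exact h g hg
  have hone : P 1 := by
    intro g hg
    have he : (⟨m, fun s => {b | (fun i => b ((1 : Equiv.Perm (Fin (m + 1))) i)) ∈ g s}⟩
        : SRel S A) = ⟨m, g⟩ := by
      refine srel_mk_eq fun s => ?_
      ext b
      simp only [Set.mem_setOf_eq, Equiv.Perm.one_apply]
    rwa [he]
  have hmul : ∀ a b, P a → P b → P (a * b) := by
    intro a b ha hb g hg
    have h1 := ha _ (hb g hg)
    have he : (⟨m, fun s => {c | (fun i => c (a i)) ∈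
        {b' : Fin (m + 1) → A | (fun i => b' (b i)) ∈ g s}}⟩ : SRel S A) =
        ⟨m, fun s => {c | (fun i => c ((a * b) i)) ∈ g s}⟩ := by
      refine srel_mk_eq fun s => ?_
      ext c
      simp only [Set.mem_setOf_eq, Equiv.Perm.mul_apply]
    rwa [he] at h1
  have hpow : ∀ (a : Equiv.Perm (Fin (m + 1))) (k : ℕ), P a → P (a ^ k) := by
    intro a k ha
    induction k with
    | zero => simpa [pow_zero] using hone
    | succ k ih => rw [pow_succ]; exact hmul _ _ ih ha
  have hinv : ∀ a, P a → P a⁻¹ := by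
    intro a ha
    have ho : 0 < orderOf a := orderOf_pos a
    have h1 : a ^ (orderOf a - 1) * a = 1 := by
      rw [← pow_succ]
      have : orderOf a - 1 + 1 = orderOf a := by omega
      rw [this, pow_orderOf_eq_one]
    have : a⁻¹ = a ^ (orderOf a - 1) := (eq_inv_of_mul_eq_one_left h1).symm
    rw [this]
    exact hpow a _ ha
  have hswap : P (Equiv.swap 0 1) := by
    intro g hg
    exact hR.2.2.1 _ hg
  have hcyc : P (Equiv.subRight (1 : Fin (m + 1))) := by
    intro g hg
    have h1 := hR.2.1 _ hg
    have he : cycRel (⟨m, g⟩ : SRel S A) =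
        ⟨m, fun s => {b | (fun i => b (Equiv.subRight (1 : Fin (m + 1)) i)) ∈ g s}⟩ := by
      refine srel_mk_eq fun s => ?_
      ext b
      simp only [Set.mem_setOf_eq, Equiv.subRight_apply]
    rwa [he] at h1
  let M : Subgroup (Equiv.Perm (Fin (m + 1))) :=
    { carrier := setOf P
      mul_mem' := fun {a b} ha hb => hmul a b ha hb
      one_mem' := hone
      inv_mem' := fun {a} ha => hinv a ha }
  suffices hM : π ∈ M by exact hM
  by_cases hm : m = 0
  · subst hm
    haveI : Subsingleton (Fin (0 + 1)) := Fin.subsingleton_one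
    have : π = 1 := by
      ext i
      exact congrArg Fin.val (Subsingleton.elim (π i) ((1 : Equiv.Perm (Fin (0 + 1))) i))
    rw [this]
    exact hone
  · obtain ⟨k, rfl⟩ : ∃ k, m = k + 1 := ⟨m - 1, by omega⟩
    have hσ : Subgroup.closure {finRotate (k + 2), Equiv.swap 0 (finRotate (k + 2) 0)} = ⊤ :=
      Equiv.Perm.closure_cycle_adjacent_swap isCycle_finRotate support_finRotate 0
    have hmem : π ∈ Subgroup.closure {finRotate (k + 2), Equiv.swap 0 (finRotate (k + 2) 0)} := by
      rw [hσ]; trivial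
    refine Subgroup.closure_le M |>.2 ?_ hmem
    rintro x (rfl | rfl)
    · have hc : finRotate (k + 2) * Equiv.subRight (1 : Fin (k + 2)) = 1 := by
        ext i
        simp [Equiv.subRight_apply, finRotate_succ_apply, sub_add_cancel]
      have : finRotate (k + 2) = (Equiv.subRight (1 : Fin (k + 2)))⁻¹ :=
        eq_inv_of_mul_eq_one_left hc
      show finRotate (k + 2) ∈ M
      rw [this]
      exact M.inv_mem hcyc
    · have h0 : finRotate (k + 2) 0 = 1 := by
        simp [finRotate_succ_apply]
      show Equiv.swap 0 (finRotate (k + 2) 0) ∈ M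
      rw [h0]
      exact hswap

end AuxPerm
section AuxEq

variable {S A : Type*} [Monoid S] {R : Set (SRel S A)}

lemma eq01_mem (hR : IsSRelClone R) (k : ℕ) :
    (⟨k + 1, fun _ => {a : Fin (k + 2) → A | a 0 = a 1}⟩ : SRel S A) ∈ R := by
  induction k with
  | zero => exact hR.1
  | succ k ih =>
    have h1 := hR.2.2.2.2.1 _ ih _ (full_unary_mem hR)
    have he : prodRel (⟨k + 1, fun _ => {a : Fin (k + 2) → A | a 0 = a 1}⟩ : SRel S A)
        (⟨0, fun _ => (Set.univ : Set (Fin 1 → A))⟩ : SRel S A) =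
        (⟨k + 2, fun _ => {a : Fin (k + 3) → A | a 0 = a 1}⟩ : SRel S A) := by
      refine srel_cast_eq (by show k + 1 + 0 + 1 = k + 2; omega) _ _
        (by show k + 1 + 0 + 1 + 1 = k + 2 + 1; omega) fun s a => ?_
      simp only [Set.mem_setOf_eq, prodRel, Set.mem_univ, and_true]
      constructor
      · intro h
        convert h using 2 <;> exact Fin.ext (by simp)
      · intro h
        convert h using 2 <;> exact Fin.ext (by simp)
    rwa [he] at h1

lemma eqij_mem (hR : IsSRelClone R) {m : ℕ} (i j : Fin (m + 1)) :
    (⟨m, fun _ => {a : Fin (m + 1) → A | a i = a j}⟩ : SRel S A) ∈ R := by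
  by_cases hij : i = j
  · subst hij
    have he : (⟨m, fun _ => {a : Fin (m + 1) → A | a i = a i}⟩ : SRel S A) =
        ⟨m, fun _ => Set.univ⟩ := srel_mk_eq fun s => by ext a; simp
    rw [he]
    exact full_mem hR m
  · by_cases hm : m = 0
    · subst hm
      haveI : Subsingleton (Fin (0 + 1)) := Fin.subsingleton_one
      exact absurd (Subsingleton.elim i j) hij
    · obtain ⟨k, rfl⟩ : ∃ k, m = k + 1 := ⟨m - 1, by omega⟩
      classical
      set π₁ : Equiv.Perm (Fin (k + 2)) := Equiv.swap 0 i with hπ₁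
      set j' : Fin (k + 2) := π₁ j with hj'
      have h10 : π₁ 0 = i := Equiv.swap_apply_left 0 i
      have hj'0 : j' ≠ 0 := by
        intro hc
        have : j = π₁ 0 := by
          rw [← hc, hj']
          exact (Equiv.swap_apply_self 0 i j).symm
        rw [h10] at this
        exact hij this.symm
      have h01 : (0 : Fin (k + 2)) ≠ 1 := by
        intro hc
        have := congrArg Fin.val hc
        simp at this
      set π₂ : Equiv.Perm (Fin (k + 2)) := if j' = 1 then π₁ else π₁ * Equiv.swap 1 j' with hπ₂
      have h20 : π₂ 0 = i := by
        rw [hπ₂]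
        split_ifs with h
        · exact h10
        · show π₁ (Equiv.swap 1 j' 0) = i
          rw [Equiv.swap_apply_of_ne_of_ne h01 (Ne.symm hj'0)]
          exact h10
      have h21 : π₂ 1 = j := by
        rw [hπ₂]
        split_ifs with h
        · rw [← h, hj']
          exact Equiv.swap_apply_self 0 i j
        · show π₁ (Equiv.swap 1 j' 1) = j
          rw [Equiv.swap_apply_left, hj']
          exact Equiv.swap_apply_self 0 i j
      have h1 := perm_mem hR π₂ (eq01_mem hR k)
      have he : (⟨k + 1, fun s => {b : Fin (k + 2) → A |
          (fun z => b (π₂ z)) ∈ {a : Fin (k + 2) → A | a 0 = a 1}}⟩ : SRel S A) =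
          ⟨k + 1, fun _ => {a : Fin (k + 2) → A | a i = a j}⟩ := by
        refine srel_mk_eq fun s => ?_
        ext b
        simp only [Set.mem_setOf_eq, h20, h21]
      rwa [he] at h1

open Classical in
lemma const_diag_mem (hR : IsSRelClone R) {m : ℕ} {σ : Set (Fin (m + 1) → A)}
    (h : IsDiagonal σ) : (⟨m, fun _ => σ⟩ : SRel S A) ∈ R := by
  rw [isDiagonal_iff] at h
  rcases h with rfl | h
  · exact empty_mem hR m
  · set L : List (S → Set (Fin (m + 1) → A)) :=
      (Finset.univ : Finset (Fin (m + 1) × Fin (m + 1))).toList.map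
        (fun p _ => if kap σ p.1 p.2 then {a : Fin (m + 1) → A | a p.1 = a p.2}
          else Set.univ) with hL
    have hmem := foldr_inter_mem hR L ?hL
    case hL =>
      intro g hg
      rw [hL, List.mem_map] at hg
      obtain ⟨p, _, rfl⟩ := hg
      by_cases hp : kap σ p.1 p.2
      · simp only [if_pos hp]
        exact eqij_mem hR p.1 p.2
      · simp only [if_neg hp]
        exact full_mem hR m
    have he : (⟨m, fun s => L.foldr (fun g t => g s ∩ t) Set.univ⟩ : SRel S A) =
        ⟨m, fun _ => σ⟩ := by
      refine srel_mk_eq fun s => ?_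
      ext a
      rw [mem_foldr_inter]
      constructor
      · intro ha
        rw [h]
        intro u v huv
        have := ha (fun _ => if kap σ u v then {a : Fin (m + 1) → A | a u = a v} else Set.univ)
          (by rw [hL, List.mem_map]
              exact ⟨(u, v), by simp [Finset.mem_toList], rfl⟩)
        rw [if_pos huv] at this
        exact this
      · intro ha g hg
        rw [hL, List.mem_map] at hg
        obtain ⟨p, _, rfl⟩ := hg
        by_cases hp : kap σ p.1 p.2
        · rw [if_pos hp]
          rw [h] at ha
          exact ha p.1 p.2 hp
        · rw [if_neg hp]
          trivial
    rwa [he] at hmem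

end AuxEq
section AuxMain

variable {S A : Type*} [Monoid S] {R : Set (SRel S A)}

lemma sd_subset [Fintype S] (hR : IsSRelClone R) : SD S A ⊆ R := by
  classical
  rintro ⟨m, r⟩ ⟨hd, hmono⟩
  set L : List (S → Set (Fin (m + 1) → A)) :=
    (Finset.univ : Finset S).toList.map
      (fun v t => {a | ∀ s' : S, s' * v = t → a ∈ r v}) with hL
  have hmem := foldr_inter_mem hR L ?hL
  case hL =>
    intro g hg
    rw [hL, List.mem_map] at hg
    obtain ⟨v, _, rfl⟩ := hg
    have hc : (⟨m, fun _ => r v⟩ : SRel S A) ∈ R := const_diag_mem hR (hd v)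
    have h1 := hR.2.2.2.2.2.2.2 v _ hc
    exact h1
  have he : (⟨m, fun t => L.foldr (fun g u => g t ∩ u) Set.univ⟩ : SRel S A) = ⟨m, r⟩ := by
    refine srel_mk_eq fun t => ?_
    ext a
    rw [mem_foldr_inter]
    constructor
    · intro ha
      have := ha (fun u => {a | ∀ s' : S, s' * t = u → a ∈ r t})
        (by rw [hL, List.mem_map]; exact ⟨t, by simp [Finset.mem_toList], rfl⟩)
      exact this 1 (one_mul t)
    · intro ha g hg
      rw [hL, List.mem_map] at hg
      obtain ⟨v, _, rfl⟩ := hg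
      intro s' hs'
      refine hmono t v ?_ ha
      rintro x ⟨u, rfl⟩
      exact ⟨u * s', by rw [mul_assoc, hs']⟩
  rwa [he] at hmem

lemma sd_isclone : IsSRelClone (SD S A) := by
  refine ⟨⟨fun s => ?_, fun s t _ => fun a h => h⟩, ?_, ?_, ?_, ?_, ?_, ?_, ?_⟩
  · -- deltaS components are diagonal
    rw [isDiagonal_iff]; right
    refine Set.Subset.antisymm (subset_dOf _) ?_
    intro a ha
    exact ha 0 1 (fun b hb => hb)
  · -- cyc
    rintro ⟨m, r⟩ ⟨hd, hm⟩
    exact ⟨fun s => isDiagonal_precomp (fun i => i - 1) (hd s),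
      fun s t hst b hb => hm s t hst hb⟩
  · -- swap
    rintro ⟨m, r⟩ ⟨hd, hm⟩
    exact ⟨fun s => isDiagonal_precomp (fun i => Equiv.swap 0 1 i) (hd s),
      fun s t hst b hb => hm s t hst hb⟩
  · -- pr
    rintro ⟨m, r⟩ ⟨hd, hm⟩
    cases m with
    | zero => exact ⟨hd, hm⟩
    | succ m =>
      refine ⟨fun s => isDiagonal_imageSucc (hd s), ?_⟩
      rintro s t hst b ⟨a, har, hab⟩
      exact ⟨a, hm s t hst har, hab⟩
  · -- prod
    rintro ⟨m, r⟩ ⟨hd, hm⟩ ⟨m', r'⟩ ⟨hd', hm'⟩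
    refine ⟨fun s => ?_, ?_⟩
    · exact isDiagonal_inter (isDiagonal_precomp _ (hd s)) (isDiagonal_precomp _ (hd' s))
    · rintro s t hst c ⟨h1, h2⟩
      exact ⟨hm s t hst h1, hm' s t hst h2⟩
  · -- inter
    rintro ⟨m, r⟩ ⟨hd, hm⟩ ⟨m', r'⟩ ⟨hd', hm'⟩
    by_cases h : m = m'
    · subst h
      have he : interRel (⟨m, r⟩ : SRel S A) ⟨m, r'⟩ =
          ⟨m, fun s => {a | a ∈ r s ∧
            (fun i : Fin (m + 1) => a (Fin.cast rfl i)) ∈ r' s}⟩ := by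
        rw [interRel]
        simp only []
        rw [dif_pos trivial]
      rw [he]
      refine ⟨fun s => ?_, ?_⟩
      · exact isDiagonal_inter (hd s) (isDiagonal_precomp (Fin.cast rfl) (hd' s))
      · rintro s t hst a ⟨h1, h2⟩
        exact ⟨hm s t hst h1, hm' s t hst h2⟩
    · have he : interRel (⟨m, r⟩ : SRel S A) ⟨m', r'⟩ = ⟨m, fun _ => ∅⟩ := by
        rw [interRel]
        simp only []
        rw [dif_neg h]
      rw [he]
      exact ⟨fun s => Or.inl rfl, fun s t _ a h => h.elim⟩
  · -- mu
    rintro v ⟨m, r⟩ ⟨hd, hm⟩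
    refine ⟨fun s => hd (s * v), ?_⟩
    intro s t hst
    refine hm (s * v) (t * v) ?_
    rintro x ⟨u, rfl⟩
    obtain ⟨w, hw⟩ := hst (show u * s ∈ {x | ∃ w, x = w * s} from ⟨u, rfl⟩)
    exact ⟨w, by rw [← mul_assoc, hw, mul_assoc]⟩
  · -- selfInter
    rintro v ⟨m, r⟩ ⟨hd, hm⟩
    refine ⟨fun s => ?_, ?_⟩
    · have he : {a : Fin (m + 1) → A | ∀ s' : S, s' * v = s → a ∈ r s'} =
          {a : Fin (m + 1) → A | ∀ p : {s' : S // s' * v = s}, a ∈ r p.1} := by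
        ext a
        exact ⟨fun h p => h p.1 p.2, fun h s' hs' => h ⟨s', hs'⟩⟩
      have h2 := isDiagonal_forall (f := fun p : {s' : S // s' * v = s} => r p.1)
        (fun p => hd p.1)
      rw [← he] at h2
      exact h2
    · intro s t hst a ha t' ht'
      obtain ⟨w, hw⟩ := hst (show s ∈ {x | ∃ w, x = w * s} from ⟨1, (one_mul s).symm⟩)
      have h1 : (w * t') * v = s := by rw [mul_assoc, ht', ← hw]
      have h2 : a ∈ r (w * t') := ha (w * t') h1
      refine hm (w * t') t' ?_ h2
      rintro x ⟨u, rfl⟩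
      exact ⟨u * w, by rw [mul_assoc]⟩

lemma srg_isclone (Q : Set (SRel S A)) : IsSRelClone (SRg Q) := by
  refine ⟨?_, ?_, ?_, ?_, ?_, ?_, ?_, ?_⟩
  · exact fun T hT => hT.1.1
  · exact fun ρ hρ T hT => hT.1.2.1 ρ (hρ T hT)
  · exact fun ρ hρ T hT => hT.1.2.2.1 ρ (hρ T hT)
  · exact fun ρ hρ T hT => hT.1.2.2.2.1 ρ (hρ T hT)
  · exact fun ρ hρ ρ' hρ' T hT => hT.1.2.2.2.2.1 ρ (hρ T hT) ρ' (hρ' T hT)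
  · exact fun ρ hρ ρ' hρ' T hT => hT.1.2.2.2.2.2.1 ρ (hρ T hT) ρ' (hρ' T hT)
  · exact fun v ρ hρ T hT => hT.1.2.2.2.2.2.2.1 v ρ (hρ T hT)
  · exact fun v ρ hρ T hT => hT.1.2.2.2.2.2.2.2 v ρ (hρ T hT)

end AuxMain
/-- `SD_A = [∅]_S = [{δ^S}]_S`: the `S`-diagonals form the least `S`-relational
clone, contained in every `S`-relational clone. -/
theorem SD_least_SRelClone {S A : Type*} [Monoid S] [Fintype S] [Fintype A] :
    SD S A = SRg (∅ : Set (SRel S A)) ∧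
    SD S A = SRg ({deltaS S A} : Set (SRel S A)) ∧
    IsSRelClone (SD S A) ∧
    ∀ R : Set (SRel S A), IsSRelClone R → SD S A ⊆ R := by
  have hclone : IsSRelClone (SD S A) := sd_isclone
  have hleast : ∀ R : Set (SRel S A), IsSRelClone R → SD S A ⊆ R :=
    fun R hR => sd_subset hR
  refine ⟨?_, ?_, hclone, hleast⟩
  · exact Set.Subset.antisymm (hleast _ (srg_isclone _))
      (Set.sInter_subset_of_mem ⟨hclone, Set.empty_subset _⟩)
  · exact Set.Subset.antisymm (hleast _ (srg_isclone _))
      (Set.sInter_subset_of_mem ⟨hclone, Set.singleton_subset_iff.2 hclone.1⟩)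

end SPreclone
end
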